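/- arXiv:1410.6883 — 3 statements merged into one kernel-verified Lean document; each statement's English description precedes it below -/
import Mathlib

section
/- Let z_1,...,z_N, λ_1,...,λ_k be complex numbers and κ_1,...,κ_k complex numbers distinct from all z_j and λ_i. Then the (N+k)×(N+k) determinant of the block matrix whose upper-left N×N block has entries z_a^{b−1}, upper-right N×k block has entries 1/(κ_b − z_a), lower-left k×N block has entries λ_a^{b−1}, and lower-right k×k block has entries 1/(κ_b − λ_a), equals (−1)^{k(k−1)/2} · [Δ_N(z) Δ_k(κ) Δ_k(λ) / ∏_{i,j=1}^k (κ_i − λ_j)] · ∏_{j=1}^N [∏_{i=1}^k (z_j − λ_i) / ∏_{i=1}^k (z_j − κ_i)]. -/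
open Finset Polynomial

lemma prod_Ioi_eq_ite {M : ℕ} (i : Fin M) (g : Fin M → ℂ) :
    ∏ j ∈ Ioi i, g j = ∏ j : Fin M, if i < j then g j else 1 := by
  rw [← Finset.prod_filter]; congr 1; ext j; simp

set_option maxHeartbeats 1000000 in
lemma cv_alg (a b c s d ε P Q : ℂ) (hP : P ≠ 0) (hQ : Q ≠ 0) (hε0 : ε ≠ 0) (hε : ε*ε=1) :
    (a*b*c)*((s*d)*ε)/(P*Q) = s*((b*d*a)/P)*(c/(ε*Q)) := by
  field_simp
  linear_combination (a*b*c*s*d) * hε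

lemma vand_split {m n : ℕ} (u : Fin m → ℂ) (v : Fin n → ℂ) :
    (∏ i : Fin (m+n), ∏ j ∈ Ioi i, (Fin.append u v j - Fin.append u v i)) =
    (∏ i : Fin m, ∏ j ∈ Ioi i, (u j - u i)) * (∏ i : Fin n, ∏ j ∈ Ioi i, (v j - v i)) *
      ∏ i : Fin m, ∏ j : Fin n, (v j - u i) := by
  simp only [prod_Ioi_eq_ite]
  rw [Fin.prod_univ_add]
  simp only [Fin.prod_univ_add (fun j => _)]
  have hcc : ∀ (i j : Fin m), (Fin.castAdd n i < Fin.castAdd n j) ↔ i < j := by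
    intro i j; simp only [Fin.lt_def, Fin.coe_castAdd]
  have hcn : ∀ (i : Fin m) (j : Fin n), (Fin.castAdd n i < Fin.natAdd m j) := by
    intro i j; simp only [Fin.lt_def, Fin.coe_castAdd, Fin.coe_natAdd]; omega
  have hnc : ∀ (i : Fin n) (j : Fin m), ¬ (Fin.natAdd m i < Fin.castAdd n j) := by
    intro i j; simp only [Fin.lt_def, Fin.coe_castAdd, Fin.coe_natAdd]; omega
  have hnn : ∀ (i j : Fin n), (Fin.natAdd m i < Fin.natAdd m j) ↔ i < j := by
    intro i j; simp only [Fin.lt_def, Fin.coe_natAdd]; omega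
  simp only [Fin.append_left, Fin.append_right, hcn, hnc, if_true, if_false,
    Finset.prod_const_one, mul_one, one_mul, hcc, hnn, Finset.prod_mul_distrib]
  ring

lemma erase_prod_sign {k : ℕ} (κ : Fin k → ℂ) :
    ∏ b : Fin k, ∏ c ∈ Finset.univ.erase b, (κ c - κ b) =
    (-1 : ℂ)^(k*(k-1)/2) * (∏ i : Fin k, ∏ j ∈ Ioi i, (κ j - κ i))^2 := by
  have herase : ∀ b : Fin k, Finset.univ.erase b = Iio b ∪ Ioi b := by
    intro b; ext c
    simp [Finset.mem_erase, Finset.mem_Iio, Finset.mem_Ioi, ne_comm, ← ne_iff_lt_or_gt]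
  have hdisj : ∀ b : Fin k, Disjoint (Iio b) (Ioi b) := by
    intro b
    exact Finset.disjoint_left.mpr (fun c hc hc2 => absurd (Finset.mem_Ioi.mp hc2)
      (not_lt.mpr (le_of_lt (Finset.mem_Iio.mp hc))))
  calc ∏ b : Fin k, ∏ c ∈ Finset.univ.erase b, (κ c - κ b)
      = ∏ b : Fin k, ((∏ c ∈ Iio b, (κ c - κ b)) * ∏ c ∈ Ioi b, (κ c - κ b)) := by
        refine Finset.prod_congr rfl fun b _ => ?_
        rw [herase b, Finset.prod_union (hdisj b)]
    _ = (∏ b : Fin k, ∏ c ∈ Iio b, (κ c - κ b)) * ∏ b : Fin k, ∏ c ∈ Ioi b, (κ c - κ b) := by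
        rw [Finset.prod_mul_distrib]
    _ = ((-1:ℂ)^(k*(k-1)/2) * ∏ b : Fin k, ∏ c ∈ Iio b, (κ b - κ c)) *
          ∏ b : Fin k, ∏ c ∈ Ioi b, (κ c - κ b) := by
        congr 1
        have : ∀ b : Fin k, ∏ c ∈ Iio b, (κ c - κ b) =
            (-1:ℂ)^(Iio b).card * ∏ c ∈ Iio b, (κ b - κ c) := by
          intro b
          rw [← Finset.prod_const, ← Finset.prod_mul_distrib]
          exact Finset.prod_congr rfl fun c _ => by ring
        simp only [this]
        rw [Finset.prod_mul_distrib, Finset.prod_pow_eq_pow_sum]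
        congr 2
        simp only [Fin.card_Iio]
        rw [show (∑ x : Fin k, (x:ℕ)) = ∑ i ∈ range k, i from Fin.sum_univ_eq_sum_range (fun i => i) k, Finset.sum_range_id]
    _ = _ := by
        have hswap : ∏ b : Fin k, ∏ c ∈ Iio b, (κ b - κ c) =
            ∏ c : Fin k, ∏ b ∈ Ioi c, (κ b - κ c) := by
          exact Finset.prod_comm' (by intro b c; simp [and_comm])
        rw [hswap]; ring

lemma eval_eq_vand_mul {n : ℕ} (v : Fin n → ℂ) (p : Fin n → ℂ[X])
    (h : ∀ j, (p j).natDegree < n) :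
    Matrix.of (fun i j => ((p j).eval (v i))) =
    (Matrix.vandermonde v) * (Matrix.of (fun (i j : Fin n) => (p j).coeff i)) := by
  ext i j
  rw [Matrix.mul_apply, Matrix.of_apply, ← eval₂_id, eval₂_eq_sum]
  simp only [eq_intCast, Int.cast_id, Matrix.vandermonde]
  have : (p j).support ⊆ range n := supp_subset_range (h j)
  rw [sum_eq_of_subset _ (fun j => zero_mul ((v i) ^ j)) this, ← Fin.sum_univ_eq_sum_range]
  congr
  ext k
  rw [mul_comm, Matrix.of_apply, RingHom.id_apply]
  rfl

/-- The Cauchy–Vandermonde determinant identity. -/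
theorem cauchy_vandermonde (N k : ℕ) (z : Fin N → ℂ) (lam κ : Fin k → ℂ)
    (hκz : ∀ i j, κ i ≠ z j) (hκlam : ∀ i j, κ i ≠ lam j) :
    Matrix.det (Matrix.fromBlocks
        (Matrix.of fun (a b : Fin N) => z a ^ (b : ℕ))
        (Matrix.of fun (a : Fin N) (b : Fin k) => 1 / (κ b - z a))
        (Matrix.of fun (a : Fin k) (b : Fin N) => lam a ^ (b : ℕ))
        (Matrix.of fun (a b : Fin k) => 1 / (κ b - lam a))) =
      (-1 : ℂ)^(k*(k-1)/2) *
        ((∏ i : Fin N, ∏ j ∈ Finset.Ioi i, (z j - z i)) *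
         (∏ i : Fin k, ∏ j ∈ Finset.Ioi i, (κ j - κ i)) *
         (∏ i : Fin k, ∏ j ∈ Finset.Ioi i, (lam j - lam i)) /
         ∏ i : Fin k, ∏ j : Fin k, (κ i - lam j)) *
        ∏ j : Fin N, ((∏ i : Fin k, (z j - lam i)) / ∏ i : Fin k, (z j - κ i)) := by
  classical
  by_cases hinj : Function.Injective κ
  swap
  · -- κ has a repeat: both sides vanish
    obtain ⟨i, j, hij, hne⟩ := Function.not_injective_iff.mp hinj
    have hL : Matrix.det (Matrix.fromBlocks
        (Matrix.of fun (a b : Fin N) => z a ^ (b : ℕ))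
        (Matrix.of fun (a : Fin N) (b : Fin k) => 1 / (κ b - z a))
        (Matrix.of fun (a : Fin k) (b : Fin N) => lam a ^ (b : ℕ))
        (Matrix.of fun (a b : Fin k) => 1 / (κ b - lam a))) = 0 := by
      refine Matrix.det_zero_of_column_eq (i := Sum.inr i) (j := Sum.inr j)
        (by simp [hne]) fun a => ?_
      cases a with
      | inl a => simp [hij]
      | inr a => simp [hij]
    have hκ0 : (∏ i : Fin k, ∏ j ∈ Finset.Ioi i, (κ j - κ i)) = 0 := by
      rcases lt_or_gt_of_ne hne with h | h
      · exact Finset.prod_eq_zero (Finset.mem_univ i)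
          (Finset.prod_eq_zero (Finset.mem_Ioi.mpr h) (by rw [hij, sub_self]))
      · exact Finset.prod_eq_zero (Finset.mem_univ j)
          (Finset.prod_eq_zero (Finset.mem_Ioi.mpr h) (by rw [← hij, sub_self]))
    rw [hL, hκ0]
    ring
  obtain ⟨x, hx⟩ : ∃ x, x = Fin.append lam z := ⟨_, rfl⟩
  obtain ⟨q, hqdef⟩ : ∃ q : ℂ[X], q = ∏ c : Fin k, (C (κ c) - X) := ⟨_, rfl⟩
  obtain ⟨pC, hpCdef⟩ : ∃ pC : Fin k → ℂ[X],
      pC = fun b => ∏ c ∈ Finset.univ.erase b, (C (κ c) - X) := ⟨_, rfl⟩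
  obtain ⟨p, hpdef⟩ : ∃ p : Fin (k+N) → ℂ[X],
      p = Fin.append pC (fun b : Fin N => X^(b:ℕ) * q) := ⟨_, rfl⟩
  -- degree facts
  have hdeg1 : ∀ a : ℂ, (C a - X : ℂ[X]).natDegree = 1 := by
    intro a
    rw [show (C a - X : ℂ[X]) = -(X - C a) by ring, natDegree_neg, natDegree_X_sub_C]
  have hpCdeg : ∀ b : Fin k, (pC b).natDegree < k := by
    intro b
    have h1 : (pC b).natDegree ≤ ∑ c ∈ Finset.univ.erase b, 1 := by
      rw [hpCdef]; dsimp only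
      refine le_trans (natDegree_prod_le _ _) ?_
      exact Finset.sum_le_sum fun c _ => le_of_eq (hdeg1 (κ c))
    have h2 : (∑ c ∈ Finset.univ.erase b, 1) = k - 1 := by
      rw [Finset.sum_const, smul_eq_mul, mul_one, Finset.card_erase_of_mem (Finset.mem_univ b),
        Finset.card_univ, Fintype.card_fin]
    have hk : 0 < k := b.pos
    omega
  have hqdeg : q.natDegree ≤ k := by
    rw [hqdef]
    refine le_trans (natDegree_prod_le _ _) ?_
    calc (∑ c : Fin k, (C (κ c) - X : ℂ[X]).natDegree) = ∑ c : Fin k, 1 :=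
          Finset.sum_congr rfl fun c _ => hdeg1 (κ c)
    _ = k := by simp
    _ ≤ k := le_refl k
  have hqk : q.coeff k = (-1:ℂ)^k := by
    have hqr : q = (-1:ℂ[X])^k * ∏ c : Fin k, (X - C (κ c)) := by
      have h0 : ((-1:ℂ[X]))^k = ∏ _c : Fin k, (-1:ℂ[X]) := by simp
      rw [hqdef, h0, ← Finset.prod_mul_distrib]
      exact Finset.prod_congr rfl fun c _ => by ring
    have hrmonic : (∏ c : Fin k, (X - C (κ c))).Monic :=
      monic_prod_of_monic _ _ fun c _ => monic_X_sub_C _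
    have hrdeg : (∏ c : Fin k, (X - C (κ c))).natDegree = k := by
      rw [natDegree_prod_of_monic _ _ fun c _ => monic_X_sub_C _]
      simp
    have : (∏ c : Fin k, (X - C (κ c))).coeff k = 1 := by
      have h1 := hrmonic.coeff_natDegree
      rwa [hrdeg] at h1
    rw [hqr, show ((-1:ℂ[X])^k) = C ((-1:ℂ)^k) by simp, coeff_C_mul, this, mul_one]
  have hdegp : ∀ j : Fin (k+N), (p j).natDegree < k + N := by
    intro j
    refine Fin.addCases (motive := fun j => (p j).natDegree < k + N) (fun b => ?_) (fun b => ?_) j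
    · show (p (Fin.castAdd N b)).natDegree < k + N
      rw [hpdef, Fin.append_left]
      exact lt_of_lt_of_le (hpCdeg b) (Nat.le_add_right k N)
    · show (p (Fin.natAdd k b)).natDegree < k + N
      rw [hpdef, Fin.append_right]
      refine lt_of_le_of_lt (natDegree_mul_le) ?_
      have h1 : ((X:ℂ[X])^(b:ℕ)).natDegree = (b:ℕ) := natDegree_X_pow _
      rw [h1]
      have := b.2
      omega
  -- eval of q
  have hq_eval : ∀ t : ℂ, q.eval t = ∏ c : Fin k, (κ c - t) := by
    intro t; rw [hqdef, eval_prod]; exact Finset.prod_congr rfl fun c _ => by simp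
  have hpC_eval : ∀ (b : Fin k) (t : ℂ), (pC b).eval t = ∏ c ∈ Finset.univ.erase b, (κ c - t) := by
    intro b t; rw [hpCdef]; dsimp only; rw [eval_prod]; exact Finset.prod_congr rfl fun c _ => by simp
  have hκx : ∀ (c : Fin k) (a : Fin (k+N)), κ c - x a ≠ 0 := by
    intro c a
    refine Fin.addCases (motive := fun a => κ c - x a ≠ 0) (fun i => ?_) (fun i => ?_) a
    · show κ c - x (Fin.castAdd N i) ≠ 0
      rw [hx, Fin.append_left]; exact sub_ne_zero.mpr (hκlam c i)
    · show κ c - x (Fin.natAdd k i) ≠ 0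
      rw [hx, Fin.append_right]; exact sub_ne_zero.mpr (hκz c i)
  -- the matrix and its reindexing
  obtain ⟨e, he1, he2⟩ : ∃ e : Fin (k+N) ≃ (Fin N ⊕ Fin k),
      (∀ i : Fin k, e (Fin.castAdd N i) = Sum.inr i) ∧
      (∀ j : Fin N, e (Fin.natAdd k j) = Sum.inl j) := by
    refine ⟨finSumFinEquiv.symm.trans (Equiv.sumComm (Fin k) (Fin N)), fun i => ?_, fun j => ?_⟩
    · simp
    · simp
  obtain ⟨M0, hM0⟩ : ∃ M0, M0 = (Matrix.fromBlocks
        (Matrix.of fun (a b : Fin N) => z a ^ (b : ℕ))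
        (Matrix.of fun (a : Fin N) (b : Fin k) => 1 / (κ b - z a))
        (Matrix.of fun (a : Fin k) (b : Fin N) => lam a ^ (b : ℕ))
        (Matrix.of fun (a b : Fin k) => 1 / (κ b - lam a))) := ⟨_, rfl⟩
  obtain ⟨Mv, hMv⟩ : ∃ Mv : Matrix (Fin (k+N)) (Fin (k+N)) ℂ,
      Mv = Matrix.of (fun a b => Fin.addCases (fun b0 : Fin k => 1/(κ b0 - x a))
        (fun b0 : Fin N => x a ^ (b0:ℕ)) b) := ⟨_, rfl⟩
  have hxc : ∀ i : Fin k, x (Fin.castAdd N i) = lam i := by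
    intro i; rw [hx]; exact Fin.append_left _ _ i
  have hxn : ∀ j : Fin N, x (Fin.natAdd k j) = z j := by
    intro j; rw [hx]; exact Fin.append_right _ _ j
  have hdet0 : M0.det = Mv.det := by
    rw [← Matrix.det_submatrix_equiv_self e M0]
    congr 1
    ext a b
    rw [Matrix.submatrix_apply]
    refine Fin.addCases (motive := fun a => ∀ b, M0 (e a) (e b) = Mv a b)
      (fun i b => ?_) (fun i b => ?_) a b
    · refine Fin.addCases (motive := fun b => M0 (e (Fin.castAdd N i)) (e b) =
          Mv (Fin.castAdd N i) b) (fun i' => ?_) (fun i' => ?_) b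
      · show M0 (e (Fin.castAdd N i)) (e (Fin.castAdd N i')) = Mv (Fin.castAdd N i) (Fin.castAdd N i')
        rw [he1, he1, hM0, hMv]
        simp [hxc]
      · show M0 (e (Fin.castAdd N i)) (e (Fin.natAdd k i')) = Mv (Fin.castAdd N i) (Fin.natAdd k i')
        rw [he1, he2, hM0, hMv]
        simp [hxc]
    · refine Fin.addCases (motive := fun b => M0 (e (Fin.natAdd k i)) (e b) =
          Mv (Fin.natAdd k i) b) (fun i' => ?_) (fun i' => ?_) b
      · show M0 (e (Fin.natAdd k i)) (e (Fin.castAdd N i')) = Mv (Fin.natAdd k i) (Fin.castAdd N i')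
        rw [he2, he1, hM0, hMv]
        simp [hxn]
      · show M0 (e (Fin.natAdd k i)) (e (Fin.natAdd k i')) = Mv (Fin.natAdd k i) (Fin.natAdd k i')
        rw [he2, he2, hM0, hMv]
        simp [hxn]
  -- clearing denominators
  have hclear : Matrix.of (fun a b => (p b).eval (x a)) =
      Matrix.diagonal (fun a => q.eval (x a)) * Mv := by
    ext a b
    rw [Matrix.diagonal_mul, Matrix.of_apply]
    refine Fin.addCases (motive := fun b => (p b).eval (x a) = q.eval (x a) * Mv a b)
      (fun b0 => ?_) (fun b0 => ?_) b
    · show (p (Fin.castAdd N b0)).eval (x a) = q.eval (x a) * Mv a (Fin.castAdd N b0)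
      rw [hpdef, Fin.append_left, hMv]
      simp only [Matrix.of_apply, Fin.addCases_left]
      rw [hpC_eval, hq_eval, ← Finset.mul_prod_erase Finset.univ _ (Finset.mem_univ b0),
        mul_one_div, mul_comm (κ b0 - x a), mul_div_assoc, div_self (hκx b0 a), mul_one]
    · show (p (Fin.natAdd k b0)).eval (x a) = q.eval (x a) * Mv a (Fin.natAdd k b0)
      rw [hpdef, Fin.append_right, hMv]
      simp only [Matrix.of_apply, Fin.addCases_right, eval_mul, eval_pow, eval_X]
      ring
  have hdetclear : (Matrix.of (fun a b => (p b).eval (x a))).det =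
      (∏ a : Fin (k+N), q.eval (x a)) * Mv.det := by
    rw [hclear, Matrix.det_mul, Matrix.det_diagonal]
  have hvdm : (Matrix.of (fun a b : Fin (k+N) => (p b).eval (x a))).det =
      (Matrix.vandermonde x).det * (Matrix.of (fun i j : Fin (k+N) => (p j).coeff (i:ℕ))).det := by
    rw [eval_eq_vand_mul x p hdegp, Matrix.det_mul]
  -- the coefficient matrix T
  obtain ⟨T, hT⟩ : ∃ T : Matrix (Fin (k+N)) (Fin (k+N)) ℂ,
      T = Matrix.of (fun i j : Fin (k+N) => (p j).coeff (i:ℕ)) := ⟨_, rfl⟩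
  obtain ⟨Ak, hAk⟩ : ∃ Ak : Matrix (Fin k) (Fin k) ℂ,
      Ak = Matrix.of (fun i j : Fin k => (pC j).coeff (i:ℕ)) := ⟨_, rfl⟩
  obtain ⟨Bk, hBk⟩ : ∃ Bk : Matrix (Fin k) (Fin N) ℂ,
      Bk = Matrix.of (fun (i : Fin k) (j : Fin N) => ((X:ℂ[X])^(j:ℕ) * q).coeff (i:ℕ)) := ⟨_, rfl⟩
  obtain ⟨Dk, hDk⟩ : ∃ Dk : Matrix (Fin N) (Fin N) ℂ,
      Dk = Matrix.of (fun (i j : Fin N) => ((X:ℂ[X])^(j:ℕ) * q).coeff (k + (i:ℕ))) := ⟨_, rfl⟩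
  have hcoeffD : ∀ (i j : Fin N), ((X:ℂ[X])^(j:ℕ) * q).coeff (k + (i:ℕ)) =
      if (j:ℕ) ≤ k + i then q.coeff (k + i - j) else 0 := by
    intro i j
    rw [mul_comm, coeff_mul_X_pow']
  have hDkdet : Dk.det = (-1:ℂ)^(k*N) := by
    have htri : Dk.BlockTriangular id := by
      intro i j hji
      rw [hDk, Matrix.of_apply, hcoeffD]
      by_cases hle : (j:ℕ) ≤ k + i
      · rw [if_pos hle]
        refine coeff_eq_zero_of_natDegree_lt ?_
        have : (j:ℕ) < (i:ℕ) := hji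
        omega
      · rw [if_neg hle]
    rw [Matrix.det_of_upperTriangular htri]
    have hdiag : ∀ i : Fin N, Dk i i = (-1:ℂ)^k := by
      intro i
      rw [hDk, Matrix.of_apply, hcoeffD, if_pos (by omega), show k + (i:ℕ) - i = k by omega, hqk]
    rw [Finset.prod_congr rfl fun i _ => hdiag i, Finset.prod_const, Finset.card_univ,
      Fintype.card_fin, ← pow_mul]
  have hAkdet : (Matrix.vandermonde κ).det * Ak.det =
      ∏ b : Fin k, ∏ c ∈ Finset.univ.erase b, (κ c - κ b) := by
    have heval : Matrix.of (fun i j : Fin k => (pC j).eval (κ i)) =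
        Matrix.vandermonde κ * Ak := by rw [hAk]; exact eval_eq_vand_mul κ pC hpCdeg
    have hdiagm : Matrix.of (fun i j : Fin k => (pC j).eval (κ i)) =
        Matrix.diagonal (fun b => ∏ c ∈ Finset.univ.erase b, (κ c - κ b)) := by
      ext a b
      by_cases hab : a = b
      · subst hab
        rw [Matrix.of_apply, Matrix.diagonal_apply_eq, hpC_eval]
      · rw [Matrix.of_apply, Matrix.diagonal_apply_ne _ hab, hpC_eval]
        exact Finset.prod_eq_zero (Finset.mem_erase.mpr ⟨hab, Finset.mem_univ a⟩) (sub_self _)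
    rw [← Matrix.det_mul, ← heval, hdiagm, Matrix.det_diagonal]
  have hTblocks : T.submatrix finSumFinEquiv finSumFinEquiv = Matrix.fromBlocks Ak Bk 0 Dk := by
    ext su sv
    cases su with
    | inl i => cases sv with
      | inl j =>
        rw [Matrix.submatrix_apply, Matrix.fromBlocks_apply₁₁, finSumFinEquiv_apply_left,
          finSumFinEquiv_apply_left, hT, hAk, Matrix.of_apply, Matrix.of_apply]
        rw [hpdef]
        simp [Fin.append_left]
      | inr j =>
        rw [Matrix.submatrix_apply, Matrix.fromBlocks_apply₁₂, finSumFinEquiv_apply_left,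
          finSumFinEquiv_apply_right, hT, hBk, Matrix.of_apply, Matrix.of_apply]
        rw [hpdef]
        simp [Fin.append_right]
    | inr i => cases sv with
      | inl j =>
        rw [Matrix.submatrix_apply, Matrix.fromBlocks_apply₂₁, finSumFinEquiv_apply_right,
          finSumFinEquiv_apply_left, hT, Matrix.of_apply]
        rw [hpdef]
        simp only [Fin.append_left, Fin.coe_natAdd, Matrix.zero_apply]
        exact coeff_eq_zero_of_natDegree_lt (lt_of_lt_of_le (hpCdeg j) (by omega))
      | inr j =>
        rw [Matrix.submatrix_apply, Matrix.fromBlocks_apply₂₂, finSumFinEquiv_apply_right,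
          finSumFinEquiv_apply_right, hT, hDk, Matrix.of_apply, Matrix.of_apply]
        rw [hpdef]
        simp [Fin.append_right]
  have hTdet : T.det = Ak.det * Dk.det := by
    rw [← Matrix.det_submatrix_equiv_self finSumFinEquiv T, hTblocks,
      Matrix.det_fromBlocks_zero₂₁]
  -- product computations
  have hqprod : (∏ a : Fin (k+N), q.eval (x a)) =
      (∏ i : Fin k, ∏ c : Fin k, (κ c - lam i)) * ∏ j : Fin N, ∏ c : Fin k, (κ c - z j) := by
    rw [Fin.prod_univ_add (fun a => q.eval (x a))]
    congr 1
    · exact Finset.prod_congr rfl fun i _ => by rw [hxc, hq_eval]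
    · exact Finset.prod_congr rfl fun j _ => by rw [hxn, hq_eval]
  have hΔx : (Matrix.vandermonde x).det =
      ((∏ i : Fin k, ∏ j ∈ Ioi i, (lam j - lam i)) * (∏ i : Fin N, ∏ j ∈ Ioi i, (z j - z i))) *
        ∏ i : Fin k, ∏ j : Fin N, (z j - lam i) := by
    rw [Matrix.det_vandermonde, hx, vand_split]
  have hπ : (∏ a : Fin (k+N), q.eval (x a)) ≠ 0 := Finset.prod_ne_zero_iff.mpr fun a _ => by
    rw [hq_eval]; exact Finset.prod_ne_zero_iff.mpr fun c _ => hκx c a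
  have key : (∏ a : Fin (k+N), q.eval (x a)) * Mv.det = (Matrix.vandermonde x).det * T.det := by
    rw [← hdetclear, hvdm, hT]
  have hAkval : Ak.det = (-1:ℂ)^(k*(k-1)/2) * (∏ i : Fin k, ∏ j ∈ Ioi i, (κ j - κ i)) := by
    have hvne : (Matrix.vandermonde κ).det ≠ 0 := Matrix.det_vandermonde_ne_zero_iff.mpr hinj
    apply mul_left_cancel₀ hvne
    rw [hAkdet, erase_prod_sign, Matrix.det_vandermonde]; ring
  -- final assembly
  rw [← hM0, hdet0]
  have hMvdet : Mv.det = ((Matrix.vandermonde x).det * T.det) / ∏ a : Fin (k+N), q.eval (x a) := by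
    rw [eq_div_iff hπ, mul_comm Mv.det]
    exact key
  have hPkl : (∏ i : Fin k, ∏ j : Fin k, (κ i - lam j)) =
      ∏ i : Fin k, ∏ c : Fin k, (κ c - lam i) := Finset.prod_comm
  have hPzl : (∏ j : Fin N, ∏ i : Fin k, (z j - lam i)) =
      ∏ i : Fin k, ∏ j : Fin N, (z j - lam i) := Finset.prod_comm
  have hflip : (∏ j : Fin N, ∏ i : Fin k, (z j - κ i)) =
      (-1:ℂ)^(k*N) * ∏ j : Fin N, ∏ c : Fin k, (κ c - z j) := by
    have h1 : ∀ j : Fin N, (∏ i : Fin k, (z j - κ i)) = (-1:ℂ)^k * ∏ c : Fin k, (κ c - z j) := by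
      intro j
      have h0 : ((-1:ℂ))^k = ∏ _c : Fin k, (-1:ℂ) := by simp
      rw [h0, ← Finset.prod_mul_distrib]
      exact Finset.prod_congr rfl fun c _ => by ring
    rw [Finset.prod_congr rfl fun j _ => h1 j, Finset.prod_mul_distrib, Finset.prod_const,
      Finset.card_univ, Fintype.card_fin, ← pow_mul]
  rw [hMvdet, hTdet, hAkval, hDkdet, hΔx, hqprod, Finset.prod_div_distrib, hPzl, hflip, hPkl]
  have hPkl0 : (∏ i : Fin k, ∏ c : Fin k, (κ c - lam i)) ≠ 0 :=
    Finset.prod_ne_zero_iff.mpr fun i _ =>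
      Finset.prod_ne_zero_iff.mpr fun c _ => sub_ne_zero.mpr (hκlam c i)
  have hPκz0 : (∏ j : Fin N, ∏ c : Fin k, (κ c - z j)) ≠ 0 :=
    Finset.prod_ne_zero_iff.mpr fun j _ =>
      Finset.prod_ne_zero_iff.mpr fun c _ => sub_ne_zero.mpr (hκz c j)
  have hε0 : ((-1:ℂ))^(k*N) ≠ 0 := pow_ne_zero _ (by norm_num)
  have hε : ((-1:ℂ))^(k*N) * ((-1:ℂ))^(k*N) = 1 := by
    rw [← pow_add]
    exact Even.neg_one_pow ⟨k*N, by ring⟩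
  exact cv_alg _ _ _ _ _ _ _ _ hPkl0 hPκz0 hε0 hε
end

section
/- For nonnegative integers N and parameters u, v with all Gamma arguments positive, the sum over j from 0 to N−1 of (a+b+2j+1) · Γ(j+u+2)Γ(j+v+2) / (Γ(j+a+b−u)Γ(j+a+b−v)) equals 1/(3−a−b+u+v) times [Γ(N+u+2)Γ(N+v+2)/(Γ(N+a+b−u−1)Γ(N+a+b−v−1)) − Γ(u+2)Γ(v+2)/(Γ(a+b−u−1)Γ(a+b−v−1))], provided 3−a−b+u+v ≠ 0. -/
open Real Finset

/-- A telescoping Gamma-function summation identity. -/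
theorem gamma_sum_identity (N : ℕ) (a b u v : ℝ)
    (hu : 0 < u + 2) (hv : 0 < v + 2)
    (hau : 0 < a + b - u - 1) (hav : 0 < a + b - v - 1)
    (hne : 3 - a - b + u + v ≠ 0) :
    ∑ j ∈ Finset.range N, (a + b + 2*(j:ℝ) + 1) *
        (Gamma ((j:ℝ) + u + 2) * Gamma ((j:ℝ) + v + 2)) /
        (Gamma ((j:ℝ) + a + b - u) * Gamma ((j:ℝ) + a + b - v)) =
      (1 / (3 - a - b + u + v)) *
        (Gamma ((N:ℝ) + u + 2) * Gamma ((N:ℝ) + v + 2) /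
           (Gamma ((N:ℝ) + a + b - u - 1) * Gamma ((N:ℝ) + a + b - v - 1)) -
         Gamma (u + 2) * Gamma (v + 2) /
           (Gamma (a + b - u - 1) * Gamma (a + b - v - 1))) := by
  induction N with
  | zero => simp
  | succ n ih =>
    rw [Finset.sum_range_succ, ih]
    have hn : (0:ℝ) ≤ (n:ℝ) := n.cast_nonneg
    have h1 : (0:ℝ) < (n:ℝ) + u + 2 := by linarith
    have h2 : (0:ℝ) < (n:ℝ) + v + 2 := by linarith
    have h3 : (0:ℝ) < (n:ℝ) + a + b - u - 1 := by linarith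
    have h4 : (0:ℝ) < (n:ℝ) + a + b - v - 1 := by linarith
    have g1 : (0:ℝ) < Gamma ((n:ℝ) + u + 2) := Gamma_pos_of_pos h1
    have g2 : (0:ℝ) < Gamma ((n:ℝ) + v + 2) := Gamma_pos_of_pos h2
    have g3 : (0:ℝ) < Gamma ((n:ℝ) + a + b - u - 1) := Gamma_pos_of_pos h3
    have g4 : (0:ℝ) < Gamma ((n:ℝ) + a + b - v - 1) := Gamma_pos_of_pos h4
    have e1 : Gamma (((n:ℕ):ℝ) + 1 + u + 2)
        = ((n:ℝ) + u + 2) * Gamma ((n:ℝ) + u + 2) := by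
      rw [show ((n:ℕ):ℝ) + 1 + u + 2 = ((n:ℝ) + u + 2) + 1 by push_cast; ring,
        Gamma_add_one (ne_of_gt h1)]
    have e2 : Gamma (((n:ℕ):ℝ) + 1 + v + 2)
        = ((n:ℝ) + v + 2) * Gamma ((n:ℝ) + v + 2) := by
      rw [show ((n:ℕ):ℝ) + 1 + v + 2 = ((n:ℝ) + v + 2) + 1 by push_cast; ring,
        Gamma_add_one (ne_of_gt h2)]
    have e3 : Gamma ((n:ℝ) + a + b - u)
        = ((n:ℝ) + a + b - u - 1) * Gamma ((n:ℝ) + a + b - u - 1) := by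
      rw [show (n:ℝ) + a + b - u = ((n:ℝ) + a + b - u - 1) + 1 by ring,
        Gamma_add_one (ne_of_gt h3)]; norm_num
    have e4 : Gamma ((n:ℝ) + a + b - v)
        = ((n:ℝ) + a + b - v - 1) * Gamma ((n:ℝ) + a + b - v - 1) := by
      rw [show (n:ℝ) + a + b - v = ((n:ℝ) + a + b - v - 1) + 1 by ring,
        Gamma_add_one (ne_of_gt h4)]; norm_num
    have e5 : Gamma (((n:ℕ):ℝ) + 1 + a + b - u - 1) = Gamma ((n:ℝ) + a + b - u) := by
      push_cast; ring_nf
    have e6 : Gamma (((n:ℕ):ℝ) + 1 + a + b - v - 1) = Gamma ((n:ℝ) + a + b - v) := by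
      push_cast; ring_nf
    push_cast
    push_cast at e1 e2 e5 e6
    rw [e5, e6, e1, e2, e3, e4]
    field_simp
    ring
end

section
/- For a, b > −1 with a + b > −1 and positive integer N, the N×N determinant det[ ∫_0^∞∫_0^∞ x^{a+i−1} y^{b+j−1} e^{−x−y}/(x+y) dx dy ]_{1≤i,j≤N} equals ∏_{j=1}^N [((j−1)!)² Γ(a+j) Γ(b+j) Γ(a+b+j)] / Γ(a+b+N+j). -/
open Real MeasureTheory Finset Set ENNReal
lemma prod_sub_range (n : ℕ) : ∏ i ∈ Finset.range n, ((n:ℝ) - (i:ℝ)) = Nat.factorial n := by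
  induction n with
  | zero => simp
  | succ n ih =>
    rw [Finset.prod_range_succ']
    push_cast
    have : ∀ i ∈ Finset.range n, ((n:ℝ) + 1 - ((i:ℝ) + 1)) = (n:ℝ) - i := by intros; ring
    rw [Finset.prod_congr rfl this, ih]
    rw [Nat.factorial_succ]
    push_cast
    ring



lemma cauchy_det (n : ℕ) (u v : ℕ → ℝ) (h : ∀ i j, i < n → j < n → u i + v j ≠ 0) :
    (Matrix.of fun i j : Fin n => (u (i:ℕ) + v (j:ℕ))⁻¹).det =
      (∏ j ∈ Finset.range n, ∏ i ∈ Finset.range j, ((u j - u i) * (v j - v i))) /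
        ∏ i ∈ Finset.range n, ∏ j ∈ Finset.range n, (u i + v j) := by
  induction n with
  | zero => simp
  | succ n ih =>
    have hne : ∀ i j : Fin (n+1), u (i:ℕ) + v (j:ℕ) ≠ 0 := fun i j => h i j i.isLt j.isLt
    have hvn : ∀ i : Fin (n+1), u (i:ℕ) + v n ≠ 0 := fun i => h i n i.isLt (Nat.lt_succ_self n)
    have hun : ∀ j : Fin (n+1), u n + v (j:ℕ) ≠ 0 := fun j => h n j (Nat.lt_succ_self n) j.isLt
    set L := Fin.last n with hLdef
    have hLval : (L : ℕ) = n := rfl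
    set M : Matrix (Fin (n+1)) (Fin (n+1)) ℝ := Matrix.of fun i j => (u (i:ℕ) + v (j:ℕ))⁻¹ with hM
    set A : Matrix (Fin (n+1)) (Fin (n+1)) ℝ := Matrix.of fun i j =>
      if j = L then (u (i:ℕ) + v n)⁻¹
      else (v n - v (j:ℕ)) * ((u (i:ℕ) + v (j:ℕ))⁻¹ * (u (i:ℕ) + v n)⁻¹) with hA
    set A3 : Matrix (Fin (n+1)) (Fin (n+1)) ℝ := Matrix.of fun i j =>
      if j = L then 1 else (u (i:ℕ) + v (j:ℕ))⁻¹ with hA3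
    set A4 : Matrix (Fin (n+1)) (Fin (n+1)) ℝ := Matrix.of fun i j =>
      if i = L then (if j = L then 1 else (u n + v (j:ℕ))⁻¹)
      else (if j = L then 0 else (u n - u (i:ℕ)) * ((u (i:ℕ) + v (j:ℕ))⁻¹ * (u n + v (j:ℕ))⁻¹)) with hA4
    set A5 : Matrix (Fin (n+1)) (Fin (n+1)) ℝ := Matrix.of fun i j =>
      if i = L then 1 else if j = L then 0 else (u (i:ℕ) + v (j:ℕ))⁻¹ with hA5
    -- Step A : column operations
    have stepA : M.det = A.det := by
      rw [← Matrix.det_transpose M, ← Matrix.det_transpose A]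
      refine (Matrix.det_eq_of_forall_row_eq_smul_add_const
        (fun j => if j = L then 0 else -1) L (if_pos rfl) ?_).symm
      intro j i
      simp only [Matrix.transpose_apply, hA, hM, Matrix.of_apply]
      by_cases hj : j = L
      · simp [hj, hLval]
      · simp only [if_neg hj]
        have h1 := hne i j
        have h2 := hvn i
        rw [hLval]
        field_simp
        ring
    -- Step B : factor out rows and columns
    have stepB : A = (Matrix.diagonal fun i : Fin (n+1) => (u (i:ℕ) + v n)⁻¹) *
        (A3 * Matrix.diagonal fun j : Fin (n+1) => if j = L then 1 else v n - v (j:ℕ)) := by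
      ext i j
      rw [Matrix.diagonal_mul, Matrix.mul_diagonal]
      simp only [hA, hA3, Matrix.of_apply]
      by_cases hj : j = L
      · simp [hj]
      · simp only [if_neg hj]; ring
    -- Step C : row operations
    have stepC : A3.det = A4.det := by
      refine (Matrix.det_eq_of_forall_row_eq_smul_add_const
        (fun i => if i = L then 0 else -1) L (if_pos rfl) ?_).symm
      intro i j
      simp only [hA3, hA4, Matrix.of_apply]
      by_cases hi : i = L
      · simp [hi, hLval]
      · simp only [if_neg hi, if_pos rfl]
        by_cases hj : j = L
        · simp [hj]
        · simp only [if_neg hj]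
          have h1 := hne i j
          have h2 := hun j
          rw [hLval]
          field_simp
          ring
    -- Step D : factor out rows and columns again
    have stepD : A4 = (Matrix.diagonal fun i : Fin (n+1) => if i = L then 1 else u n - u (i:ℕ)) *
        (A5 * Matrix.diagonal fun j : Fin (n+1) => if j = L then 1 else (u n + v (j:ℕ))⁻¹) := by
      ext i j
      rw [Matrix.diagonal_mul, Matrix.mul_diagonal]
      simp only [Matrix.of_apply, hA4, hA5]
      by_cases hi : i = L <;> by_cases hj : j = L <;> simp [hi, hj, hLval]
    -- Step E : expand along the last column
    have stepE : A5.det = (Matrix.of fun i j : Fin n => (u (i:ℕ) + v (j:ℕ))⁻¹).det := by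
      rw [Matrix.det_succ_column A5 L]
      rw [Finset.sum_eq_single L]
      · have hsub : A5.submatrix L.succAbove L.succAbove =
            Matrix.of fun i j : Fin n => (u (i:ℕ) + v (j:ℕ))⁻¹ := by
          ext i j
          simp only [Matrix.submatrix_apply, hLdef, Fin.succAbove_last, hA5, Matrix.of_apply]
          rw [if_neg (Fin.castSucc_lt_last i).ne, if_neg (Fin.castSucc_lt_last j).ne]
          simp
        rw [hsub]
        simp only [hA5, Matrix.of_apply, if_pos rfl]
        rw [hLval]
        have : ((-1 : ℝ)) ^ (n + n) = 1 := Even.neg_one_pow ⟨n, rfl⟩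
        rw [this]
        simp
      · intro i _ hi
        simp [hA5, hi]
      · simp
    -- collect determinants
    have hAdet : M.det = (∏ i : Fin (n+1), (u (i:ℕ) + v n)⁻¹) *
        (A3.det * ∏ j : Fin (n+1), (if j = L then 1 else v n - v (j:ℕ))) := by
      rw [stepA, stepB, Matrix.det_mul, Matrix.det_mul, Matrix.det_diagonal, Matrix.det_diagonal]
    have hA3det : A3.det = (∏ i : Fin (n+1), (if i = L then 1 else u n - u (i:ℕ))) *
        (A5.det * ∏ j : Fin (n+1), (if j = L then 1 else (u n + v (j:ℕ))⁻¹)) := by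
      rw [stepC, stepD, Matrix.det_mul, Matrix.det_mul, Matrix.det_diagonal, Matrix.det_diagonal]
    -- products
    have p1 : (∏ i : Fin (n+1), (u (i:ℕ) + v n)⁻¹) =
        (∏ i ∈ Finset.range (n+1), (u i + v n))⁻¹ := by
      rw [← Finset.prod_inv_distrib]
      exact Fin.prod_univ_eq_prod_range (fun i => (u i + v n)⁻¹) (n+1)
    have castprod : ∀ w : ℕ → ℝ, (∏ j : Fin (n+1), (if j = L then 1 else w (j:ℕ))) =
        ∏ j ∈ Finset.range n, w j := by
      intro w
      rw [Fin.prod_univ_castSucc, if_pos rfl, mul_one]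
      rw [Finset.prod_congr rfl (fun j _ => if_neg (Fin.castSucc_lt_last j).ne)]
      simp only [Fin.coe_castSucc]
      exact Fin.prod_univ_eq_prod_range (fun j => w j) n
    have p2 : (∏ j : Fin (n+1), (if j = L then 1 else v n - v (j:ℕ))) =
        ∏ j ∈ Finset.range n, (v n - v j) := castprod (fun j => v n - v j)
    have p3 : (∏ i : Fin (n+1), (if i = L then 1 else u n - u (i:ℕ))) =
        ∏ i ∈ Finset.range n, (u n - u i) := castprod (fun i => u n - u i)
    have p4 : (∏ j : Fin (n+1), (if j = L then 1 else (u n + v (j:ℕ))⁻¹)) =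
        (∏ j ∈ Finset.range n, (u n + v j))⁻¹ := by
      rw [castprod (fun j => (u n + v j)⁻¹), Finset.prod_inv_distrib]
    -- induction hypothesis
    have ihh := ih (fun i j hi hj => h i j (Nat.lt_succ_of_lt hi) (Nat.lt_succ_of_lt hj))
    -- nonvanishing
    have hP1 : (∏ i ∈ Finset.range (n+1), (u i + v n)) ≠ 0 :=
      Finset.prod_ne_zero_iff.mpr fun i hi => h i n (Finset.mem_range.mp hi) (Nat.lt_succ_self n)
    have hP2 : (∏ j ∈ Finset.range n, (u n + v j)) ≠ 0 :=
      Finset.prod_ne_zero_iff.mpr fun j hj =>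
        h n j (Nat.lt_succ_self n) (Nat.lt_succ_of_lt (Finset.mem_range.mp hj))
    have hDen : (∏ i ∈ Finset.range n, ∏ j ∈ Finset.range n, (u i + v j)) ≠ 0 :=
      Finset.prod_ne_zero_iff.mpr fun i hi => Finset.prod_ne_zero_iff.mpr fun j hj =>
        h i j (Nat.lt_succ_of_lt (Finset.mem_range.mp hi))
          (Nat.lt_succ_of_lt (Finset.mem_range.mp hj))
    -- expand RHS
    have hNum : (∏ j ∈ Finset.range (n+1), ∏ i ∈ Finset.range j, ((u j - u i) * (v j - v i))) =
        (∏ j ∈ Finset.range n, ∏ i ∈ Finset.range j, ((u j - u i) * (v j - v i))) *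
          ((∏ i ∈ Finset.range n, (u n - u i)) * (∏ i ∈ Finset.range n, (v n - v i))) := by
      rw [Finset.prod_range_succ, Finset.prod_mul_distrib]
    have hDenExp : (∏ i ∈ Finset.range (n+1), ∏ j ∈ Finset.range (n+1), (u i + v j)) =
        ((∏ i ∈ Finset.range n, ∏ j ∈ Finset.range n, (u i + v j)) *
          (∏ j ∈ Finset.range n, (u n + v j))) *
          (∏ i ∈ Finset.range (n+1), (u i + v n)) := by
      rw [Finset.prod_range_succ]
      simp_rw [Finset.prod_range_succ]
      rw [Finset.prod_mul_distrib]
      ring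
    rw [hAdet, hA3det, stepE, ihh, p1, p2, p3, p4, hNum, hDenExp, Finset.prod_range_succ]
    clear_value M A A3 A4 A5
    clear stepA stepB stepC stepD stepE hAdet hA3det hM hA hA3 hA4 hA5 ihh hne hvn hun hNum hDenExp castprod p1 p2 p3 p4 h ih
    set N1 := ∏ j ∈ Finset.range n, ∏ i ∈ Finset.range j, ((u j - u i) * (v j - v i)) with hN1
    set D := ∏ i ∈ Finset.range n, ∏ j ∈ Finset.range n, (u i + v j) with hD
    set F := ∏ i ∈ Finset.range n, (u n - u i) with hF
    set E := ∏ i ∈ Finset.range n, (v n - v i) with hE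
    set P1 := ∏ i ∈ Finset.range n, (u i + v n) with hP1e
    set P2 := ∏ j ∈ Finset.range n, (u n + v j) with hP2e
    have key : ((P1 * (u n + v n))⁻¹ * (F * (N1 / D * P2⁻¹) * E)) =
        N1 * (F * E) / (D * P2 * (P1 * (u n + v n))) := by
      field_simp
    exact key


-- Lebesgue integral of z^r * exp(-(c*z)) over (0,∞)
lemma lint_rpow_exp {r c : ℝ} (hr : -1 < r) (hc : 0 < c) :
    ∫⁻ z in Ioi (0:ℝ), ENNReal.ofReal (z ^ r * Real.exp (-(c * z))) =
      ENNReal.ofReal ((1/c) ^ (r+1) * Real.Gamma (r+1)) := by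
  have hint : IntegrableOn (fun z : ℝ => z ^ r * Real.exp (-(c * z))) (Ioi 0) := by
    have := integrableOn_rpow_mul_exp_neg_mul_rpow hr zero_lt_one hc
    simpa [Real.rpow_one, neg_mul] using this
  rw [← ofReal_integral_eq_lintegral_ofReal hint]
  · congr 1
    have := Real.integral_rpow_mul_exp_neg_mul_Ioi (a := r + 1) (by linarith) hc
    rw [add_sub_cancel_right] at this
    exact this
  · filter_upwards [self_mem_ae_restrict measurableSet_Ioi] with z hz
    exact mul_nonneg (Real.rpow_nonneg (le_of_lt hz) r) (Real.exp_pos _).le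

-- Lebesgue integral of exp(-(c*t)) over (1,∞)
lemma lint_exp_Ioi_one {c : ℝ} (hc : 0 < c) :
    ∫⁻ t in Ioi (1:ℝ), ENNReal.ofReal (Real.exp (-(c * t))) =
      ENNReal.ofReal (c⁻¹ * Real.exp (-c)) := by
  have hint : IntegrableOn (fun t : ℝ => Real.exp (-(c * t))) (Ioi 1) := by
    simpa [neg_mul] using exp_neg_integrableOn_Ioi 1 hc
  rw [← ofReal_integral_eq_lintegral_ofReal hint]
  · congr 1
    have := MeasureTheory.integral_comp_mul_left_Ioi (fun u => Real.exp (-u)) 1 hc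
    simp only [smul_eq_mul, mul_one] at this
    rw [this, integral_exp_neg_Ioi]
  · filter_upwards with t using (Real.exp_pos _).le


lemma entry_val {p q : ℝ} (hp : -1 < p) (hq : -1 < q) (hpq : 0 < p + q + 1) :
    ∫ x in Ioi (0:ℝ), ∫ y in Ioi (0:ℝ), x ^ p * y ^ q * Real.exp (-x - y) / (x + y) =
      Real.Gamma (p+1) * Real.Gamma (q+1) / (p+q+1) := by
  have hFm : Measurable (fun z : ℝ × ℝ =>
      ENNReal.ofReal (z.1 ^ p * z.2 ^ q * Real.exp (-z.1 - z.2) / (z.1 + z.2))) := by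
    exact ENNReal.measurable_ofReal.comp
      ((((measurable_fst.pow_const p).mul (measurable_snd.pow_const q)).mul
        ((measurable_fst.neg.sub measurable_snd).exp)).div
        (measurable_fst.add measurable_snd))
  set Φ : ℝ → ℝ≥0∞ := fun x => ∫⁻ y in Ioi (0:ℝ),
    ENNReal.ofReal (x ^ p * y ^ q * Real.exp (-x - y) / (x + y)) with hΦdef
  have hΦm : Measurable Φ := Measurable.lintegral_prod_right hFm
  -- step 1 : for x > 0 rewrite Φ x
  have key1 : ∀ x ∈ Ioi (0:ℝ), Φ x = ∫⁻ t in Ioi (1:ℝ),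
      ENNReal.ofReal (x ^ p * Real.exp (-(t * x)) * ((1/t) ^ (q+1) * Real.Gamma (q+1))) := by
    intro x hx
    simp only [hΦdef]
    have h1 : ∫⁻ y in Ioi (0:ℝ), ENNReal.ofReal (x ^ p * y ^ q * Real.exp (-x - y) / (x + y)) =
        ∫⁻ y in Ioi (0:ℝ), ∫⁻ t in Ioi (1:ℝ),
          ENNReal.ofReal ((x ^ p * Real.exp (-(t * x))) * (y ^ q * Real.exp (-(t * y)))) := by
      refine setLIntegral_congr_fun measurableSet_Ioi ?_
      intro y hy
      have hxy : 0 < x + y := by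
        have h1 := mem_Ioi.mp hx; have h2 := mem_Ioi.mp hy; linarith
      have hC : 0 ≤ x ^ p * y ^ q :=
        mul_nonneg (Real.rpow_nonneg (le_of_lt hx) p) (Real.rpow_nonneg (le_of_lt hy) q)
      have e1 : ∀ t : ℝ, (x ^ p * Real.exp (-(t * x))) * (y ^ q * Real.exp (-(t * y))) =
          (x ^ p * y ^ q) * Real.exp (-((x + y) * t)) := by
        intro t
        rw [show -((x + y) * t) = -(t * x) + -(t * y) by ring, Real.exp_add]
        ring
      simp_rw [e1, ENNReal.ofReal_mul hC]
      rw [lintegral_const_mul' _ _ ENNReal.ofReal_ne_top, lint_exp_Ioi_one hxy,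
        ← ENNReal.ofReal_mul hC]
      congr 1
      rw [show -x - y = -(x + y) by ring, div_eq_mul_inv]
      ring
    have h2 : ∫⁻ y in Ioi (0:ℝ), ∫⁻ t in Ioi (1:ℝ),
          ENNReal.ofReal ((x ^ p * Real.exp (-(t * x))) * (y ^ q * Real.exp (-(t * y)))) =
        ∫⁻ t in Ioi (1:ℝ), ∫⁻ y in Ioi (0:ℝ),
          ENNReal.ofReal ((x ^ p * Real.exp (-(t * x))) * (y ^ q * Real.exp (-(t * y)))) := by
      apply lintegral_lintegral_swap
      apply Measurable.aemeasurable
      exact ENNReal.measurable_ofReal.comp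
        ((measurable_const.mul ((measurable_snd.mul_const x).neg.exp)).mul
          ((measurable_fst.pow_const q).mul ((measurable_snd.mul measurable_fst).neg.exp)))
    rw [h1, h2]
    refine setLIntegral_congr_fun measurableSet_Ioi ?_
    intro t ht
    have ht0 : (0:ℝ) < t := lt_trans one_pos (mem_Ioi.mp ht)
    have hC2 : 0 ≤ x ^ p * Real.exp (-(t * x)) :=
      mul_nonneg (Real.rpow_nonneg (le_of_lt hx) p) (Real.exp_pos _).le
    simp_rw [ENNReal.ofReal_mul hC2]
    rw [lintegral_const_mul' _ _ ENNReal.ofReal_ne_top, lint_rpow_exp hq ht0,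
      ← ENNReal.ofReal_mul hC2]
  -- step 2 : the full Lebesgue integral
  have hΓΓ : (0:ℝ) < Real.Gamma (p+1) * Real.Gamma (q+1) :=
    mul_pos (Real.Gamma_pos_of_pos (by linarith)) (Real.Gamma_pos_of_pos (by linarith))
  have hL : ∫⁻ x in Ioi (0:ℝ), Φ x =
      ENNReal.ofReal (Real.Gamma (p+1) * Real.Gamma (q+1) * (1/(p+q+1))) := by
    rw [setLIntegral_congr_fun measurableSet_Ioi
      key1]
    rw [lintegral_lintegral_swap]
    · have h3 : ∫⁻ t in Ioi (1:ℝ), ∫⁻ x in Ioi (0:ℝ),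
          ENNReal.ofReal (x ^ p * Real.exp (-(t * x)) * ((1/t) ^ (q+1) * Real.Gamma (q+1))) =
          ∫⁻ t in Ioi (1:ℝ),
            ENNReal.ofReal (Real.Gamma (p+1) * Real.Gamma (q+1) * t ^ (-(p+q+2))) := by
        refine setLIntegral_congr_fun measurableSet_Ioi ?_
        intro t ht
        have ht0 : (0:ℝ) < t := lt_trans one_pos (mem_Ioi.mp ht)
        have hC3 : 0 ≤ (1/t) ^ (q+1) * Real.Gamma (q+1) :=
          mul_nonneg (Real.rpow_nonneg (by positivity) _) (Real.Gamma_pos_of_pos (by linarith)).le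
        have comm : ∀ x : ℝ, x ^ p * Real.exp (-(t * x)) * ((1/t) ^ (q+1) * Real.Gamma (q+1)) =
            ((1/t) ^ (q+1) * Real.Gamma (q+1)) * (x ^ p * Real.exp (-(t * x))) :=
          fun x => mul_comm _ _
        simp_rw [comm, ENNReal.ofReal_mul hC3]
        rw [lintegral_const_mul' _ _ ENNReal.ofReal_ne_top, lint_rpow_exp hp ht0,
          ← ENNReal.ofReal_mul hC3]
        congr 1
        have e2 : (1/t) ^ (q+1) * (1/t) ^ (p+1) = t ^ (-(p+q+2)) := by
          rw [← Real.rpow_add (by positivity), one_div, Real.inv_rpow ht0.le,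
            ← Real.rpow_neg ht0.le]
          ring_nf
        calc (1/t) ^ (q+1) * Real.Gamma (q+1) * ((1/t) ^ (p+1) * Real.Gamma (p+1)) =
            ((1/t) ^ (q+1) * (1/t) ^ (p+1)) * (Real.Gamma (p+1) * Real.Gamma (q+1)) := by ring
          _ = _ := by rw [e2]; ring
      rw [h3]
      simp_rw [ENNReal.ofReal_mul hΓΓ.le]
      rw [lintegral_const_mul' _ _ ENNReal.ofReal_ne_top]
      have h4 : ∫⁻ t in Ioi (1:ℝ), ENNReal.ofReal (t ^ (-(p+q+2))) =
          ENNReal.ofReal (1/(p+q+1)) := by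
        rw [← ofReal_integral_eq_lintegral_ofReal
          (integrableOn_Ioi_rpow_of_lt (by linarith) one_pos)]
        · rw [integral_Ioi_rpow_of_lt (by linarith) one_pos, Real.one_rpow,
            show -(p+q+2)+1 = -(p+q+1) by ring, neg_div_neg_eq]
        · filter_upwards [self_mem_ae_restrict measurableSet_Ioi] with t ht
          exact Real.rpow_nonneg (le_of_lt (lt_trans one_pos ht)) _
      rw [h4, ← ENNReal.ofReal_mul hΓΓ.le]
    · apply Measurable.aemeasurable
      exact ENNReal.measurable_ofReal.comp
        (((measurable_fst.pow_const p).mul ((measurable_snd.mul measurable_fst).neg.exp)).mul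
          (((measurable_const.div measurable_snd).pow_const (q+1)).mul measurable_const))
  -- step 3 : back to the Bochner integral
  have hnn : 0 ≤ Real.Gamma (p+1) * Real.Gamma (q+1) * (1/(p+q+1)) := by positivity
  have step3 : ∫ x in Ioi (0:ℝ), (∫ y in Ioi (0:ℝ),
      x ^ p * y ^ q * Real.exp (-x - y) / (x + y)) =
      ∫ x in Ioi (0:ℝ), (Φ x).toReal := by
    refine setIntegral_congr_fun measurableSet_Ioi ?_
    intro x hx
    simp only [hΦdef]
    rw [integral_eq_lintegral_of_nonneg_ae]
    · filter_upwards [self_mem_ae_restrict measurableSet_Ioi] with y hy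
      have hxy : 0 < x + y := by
        have h1 := mem_Ioi.mp hx; have h2 := mem_Ioi.mp hy; linarith
      have := Real.rpow_nonneg (le_of_lt (mem_Ioi.mp hx)) p
      have := Real.rpow_nonneg (le_of_lt (mem_Ioi.mp hy)) q
      positivity
    · exact (((measurable_const.mul (measurable_id.pow_const q)).mul
        ((measurable_const.sub measurable_id).exp)).div
        (measurable_const.add measurable_id)).aestronglyMeasurable
  have hfin : ∀ᵐ x ∂(volume.restrict (Ioi (0:ℝ))), Φ x < ⊤ := by
    refine ae_lt_top hΦm ?_
    rw [hL]
    exact ENNReal.ofReal_ne_top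
  rw [step3, integral_toReal hΦm.aemeasurable.restrict hfin, hL, ENNReal.toReal_ofReal hnn]
  field_simp


lemma Gamma_add_nat (s : ℝ) (hs : 0 < s) (n : ℕ) :
    Real.Gamma (s + n) = (∏ i ∈ Finset.range n, (s + i)) * Real.Gamma s := by
  induction n with
  | zero => simp
  | succ n ih =>
    have h1 : s + ((n+1 : ℕ):ℝ) = (s + n) + 1 := by push_cast; ring
    have h2 : s + (n:ℝ) ≠ 0 := by positivity
    rw [h1, Real.Gamma_add_one h2, Finset.prod_range_succ, ih]
    ring




/-- Normalization constant of the Cauchy two-matrix model with Laguerre-type weights. -/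
theorem cauchy_normalization (N : ℕ) (hN : 0 < N) (a b : ℝ)
    (ha : -1 < a) (hb : -1 < b) (hab : -1 < a + b) :
    Matrix.det (Matrix.of fun i j : Fin N =>
        ∫ x in Set.Ioi (0:ℝ), ∫ y in Set.Ioi (0:ℝ),
          x ^ (a + ((i:ℕ):ℝ)) * y ^ (b + ((j:ℕ):ℝ)) * Real.exp (-x - y) / (x + y)) =
      ∏ j ∈ Finset.range N,
        (Nat.factorial j : ℝ)^2 * Gamma (a + (j:ℝ) + 1) * Gamma (b + (j:ℝ) + 1) *
          Gamma (a + b + (j:ℝ) + 1) / Gamma (a + b + (N:ℝ) + (j:ℝ) + 1) := by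
  have hne : ∀ i j : ℕ, i < N → j < N → ((i:ℝ)) + (a + b + (j:ℝ) + 1) ≠ 0 := by
    intro i j _ _
    have h1 : (0:ℝ) ≤ (i:ℝ) := Nat.cast_nonneg i
    have h2 : (0:ℝ) ≤ (j:ℝ) := Nat.cast_nonneg j
    have : (0:ℝ) < (i:ℝ) + (a + b + (j:ℝ) + 1) := by linarith
    exact ne_of_gt this
  -- rewrite the matrix
  have hMeq : (Matrix.of fun i j : Fin N =>
        ∫ x in Set.Ioi (0:ℝ), ∫ y in Set.Ioi (0:ℝ),
          x ^ (a + ((i:ℕ):ℝ)) * y ^ (b + ((j:ℕ):ℝ)) * Real.exp (-x - y) / (x + y)) =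
      Matrix.diagonal (fun i : Fin N => Gamma (a + ((i:ℕ):ℝ) + 1)) *
        ((Matrix.of fun i j : Fin N => (((i:ℕ):ℝ) + (a + b + ((j:ℕ):ℝ) + 1))⁻¹) *
          Matrix.diagonal (fun j : Fin N => Gamma (b + ((j:ℕ):ℝ) + 1))) := by
    ext i j
    rw [Matrix.diagonal_mul, Matrix.mul_diagonal, Matrix.of_apply, Matrix.of_apply]
    have hi : (0:ℝ) ≤ ((i:ℕ):ℝ) := Nat.cast_nonneg _
    have hj : (0:ℝ) ≤ ((j:ℕ):ℝ) := Nat.cast_nonneg _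
    rw [entry_val (by linarith) (by linarith) (by linarith)]
    rw [div_eq_mul_inv,
      show a + ((i:ℕ):ℝ) + (b + ((j:ℕ):ℝ)) + 1 = ((i:ℕ):ℝ) + (a + b + ((j:ℕ):ℝ) + 1) by ring]
    ring
  rw [hMeq, Matrix.det_mul, Matrix.det_mul, Matrix.det_diagonal, Matrix.det_diagonal]
  rw [cauchy_det N (fun m => (m:ℝ)) (fun m => a + b + (m:ℝ) + 1) hne]
  -- numerator
  have hNum : (∏ j ∈ Finset.range N, ∏ i ∈ Finset.range j,
      (((j:ℝ) - (i:ℝ)) * ((a + b + (j:ℝ) + 1) - (a + b + (i:ℝ) + 1)))) =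
      ∏ j ∈ Finset.range N, ((Nat.factorial j : ℝ))^2 := by
    refine Finset.prod_congr rfl fun j _ => ?_
    have e1 : ∀ i ∈ Finset.range j, ((j:ℝ) - (i:ℝ)) * ((a + b + (j:ℝ) + 1) - (a + b + (i:ℝ) + 1))
        = ((j:ℝ) - (i:ℝ)) * ((j:ℝ) - (i:ℝ)) := by intro i _; ring
    rw [Finset.prod_congr rfl e1, Finset.prod_mul_distrib, prod_sub_range, sq]
  -- denominator
  have hDen : (∏ i ∈ Finset.range N, ∏ j ∈ Finset.range N, ((i:ℝ) + (a + b + (j:ℝ) + 1))) =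
      ∏ j ∈ Finset.range N, ∏ i ∈ Finset.range N, ((a + b + (j:ℝ) + 1) + (i:ℝ)) := by
    rw [Finset.prod_comm]
    exact Finset.prod_congr rfl fun j _ => Finset.prod_congr rfl fun i _ => by ring
  have hDne : (∏ j ∈ Finset.range N, ∏ i ∈ Finset.range N, ((a + b + (j:ℝ) + 1) + (i:ℝ))) ≠ 0 :=
    Finset.prod_ne_zero_iff.mpr fun j hj => Finset.prod_ne_zero_iff.mpr fun i hi => by
      have := hne i j (Finset.mem_range.mp hi) (Finset.mem_range.mp hj)
      intro hc; exact this (by linarith)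
  -- rewrite the RHS
  have hRHS : (∏ j ∈ Finset.range N,
      (Nat.factorial j : ℝ)^2 * Gamma (a + (j:ℝ) + 1) * Gamma (b + (j:ℝ) + 1) *
        Gamma (a + b + (j:ℝ) + 1) / Gamma (a + b + (N:ℝ) + (j:ℝ) + 1)) =
      (∏ j ∈ Finset.range N,
        (Nat.factorial j : ℝ)^2 * Gamma (a + (j:ℝ) + 1) * Gamma (b + (j:ℝ) + 1)) /
        (∏ j ∈ Finset.range N, ∏ i ∈ Finset.range N, ((a + b + (j:ℝ) + 1) + (i:ℝ))) := by
    rw [← Finset.prod_div_distrib]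
    refine Finset.prod_congr rfl fun j hj => ?_
    have hs : (0:ℝ) < a + b + (j:ℝ) + 1 := by
      have : (0:ℝ) ≤ (j:ℝ) := Nat.cast_nonneg _
      linarith
    have hG : Gamma (a + b + (N:ℝ) + (j:ℝ) + 1) =
        (∏ i ∈ Finset.range N, ((a + b + (j:ℝ) + 1) + (i:ℝ))) * Gamma (a + b + (j:ℝ) + 1) := by
      rw [show a + b + (N:ℝ) + (j:ℝ) + 1 = (a + b + (j:ℝ) + 1) + (N:ℕ) by push_cast; ring]
      exact Gamma_add_nat _ hs N
    rw [hG]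
    have hGne : Gamma (a + b + (j:ℝ) + 1) ≠ 0 := (Real.Gamma_pos_of_pos hs).ne'
    have hPne : (∏ i ∈ Finset.range N, ((a + b + (j:ℝ) + 1) + (i:ℝ))) ≠ 0 :=
      Finset.prod_ne_zero_iff.mpr fun i hi => by
        have : (0:ℝ) ≤ (i:ℝ) := Nat.cast_nonneg _
        intro hc; nlinarith
    field_simp
  rw [hNum, hDen, hRHS]
  rw [Fin.prod_univ_eq_prod_range (fun i => Gamma (a + (i:ℝ) + 1)) N,
    Fin.prod_univ_eq_prod_range (fun j => Gamma (b + (j:ℝ) + 1)) N]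
  rw [show (∏ j ∈ Finset.range N,
      (Nat.factorial j : ℝ)^2 * Gamma (a + (j:ℝ) + 1) * Gamma (b + (j:ℝ) + 1)) =
      (∏ j ∈ Finset.range N, (Nat.factorial j : ℝ)^2) *
      (∏ j ∈ Finset.range N, Gamma (a + (j:ℝ) + 1)) *
      (∏ j ∈ Finset.range N, Gamma (b + (j:ℝ) + 1)) by
    rw [← Finset.prod_mul_distrib, ← Finset.prod_mul_distrib]]
  field_simp
end
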